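/- Let $A, B, X \in \mathbb{M}_n$ be such that the block matrix $M = \begin{bmatrix} A & X \\ X^* & B \end{bmatrix} \in \mathbb{M}_{2n}$ is positive semi-definite. Then there exist unitary matrices $U, V \in \mathbb{M}_{2n}$ such that $M = U \begin{bmatrix} \frac{A+B}{2} + \mathrm{Im}\,X & 0 \\ 0 & 0 \end{bmatrix} U^* + V \begin{bmatrix} 0 & 0 \\ 0 & \frac{A+B}{2} - \mathrm{Im}\,X \end{bmatrix} V^*$. -/

import Mathlib

open Matrix
open scoped ComplexOrder

/-- The absolute value `|Z| = (Zᴴ Z)^(1/2)` of a square complex matrix. -/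
noncomputable def matAbs {m : Type*} [Fintype m] [DecidableEq m]
    (Z : Matrix m m ℂ) : Matrix m m ℂ :=
  ((Matrix.posSemidef_conjTranspose_mul_self Z).1.eigenvectorUnitary : Matrix m m ℂ) *
    Matrix.diagonal ((↑) ∘ (Real.sqrt ∘ (Matrix.posSemidef_conjTranspose_mul_self Z).1.eigenvalues)) *
    (star (Matrix.posSemidef_conjTranspose_mul_self Z).1.eigenvectorUnitary : Matrix m m ℂ)

/-- Functional calculus: apply `f : ℝ → ℝ` to the eigenvalues of a Hermitian matrix
(junk value `0` if the matrix is not Hermitian). -/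
noncomputable def hermApply {m : Type*} [Fintype m] [DecidableEq m]
    (f : ℝ → ℝ) (S : Matrix m m ℂ) : Matrix m m ℂ :=
  if hS : S.IsHermitian then
    (hS.eigenvectorUnitary : Matrix m m ℂ) *
      Matrix.diagonal (fun i => (f (hS.eigenvalues i) : ℂ)) *
      (star (hS.eigenvectorUnitary : Matrix m m ℂ))
  else 0

/-- Real power of a positive semi-definite matrix by functional calculus. -/
noncomputable def matPow {m : Type*} [Fintype m] [DecidableEq m]
    (S : Matrix m m ℂ) (p : ℝ) : Matrix m m ℂ :=
  hermApply (fun x => x ^ p) S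

/-- A symmetric (unitarily invariant) norm on complex `m × m` matrices. -/
structure IsSymmetricNorm {m : Type*} [Fintype m] [DecidableEq m]
    (N : Matrix m m ℂ → ℝ) : Prop where
  add_le : ∀ A B, N (A + B) ≤ N A + N B
  smul : ∀ (c : ℂ) (A), N (c • A) = ‖c‖ * N A
  eq_zero_of : ∀ A, N A = 0 → A = 0
  unitary_mul_left : ∀ (U : Matrix.unitaryGroup m ℂ) (A), N (U * A) = N A
  mul_unitary_right : ∀ (U : Matrix.unitaryGroup m ℂ) (A), N (A * U) = N A

/-- Eigenvalues of a Hermitian matrix (junk value `0` if not Hermitian). -/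
noncomputable def eigVals {m : Type*} [Fintype m] [DecidableEq m]
    (Z : Matrix m m ℂ) : m → ℝ :=
  if hZ : Z.IsHermitian then hZ.eigenvalues else 0

/-- Eigenvalues of a Hermitian `n × n` matrix listed in decreasing order. -/
noncomputable def eigDown {n : ℕ} (Z : Matrix (Fin n) (Fin n) ℂ) : Fin n → ℝ :=
  fun i => (eigVals Z ∘ Tuple.sort (eigVals Z)) i.rev

/-- `Z ^ ↓`: the diagonal matrix listing the eigenvalues of `Z` in decreasing order. -/
noncomputable def downMat {n : ℕ} (Z : Matrix (Fin n) (Fin n) ℂ) : Matrix (Fin n) (Fin n) ℂ :=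
  Matrix.diagonal (fun i => (eigDown Z i : ℂ))

/-- Schatten `p`-norm. -/
noncomputable def schattenNorm {m : Type*} [Fintype m] [DecidableEq m]
    (p : ℝ) (Z : Matrix m m ℂ) : ℝ :=
  (∑ i, eigVals (matAbs Z) i ^ p) ^ (1 / p)

/-- Operator norm (largest singular value). -/
noncomputable def opNormInf {m : Type*} [Fintype m] [DecidableEq m]
    (Z : Matrix m m ℂ) : ℝ :=
  ⨆ i, Real.sqrt (eigVals (Zᴴ * Z) i)

/-- Numerical range. -/
def numRange {m : Type*} [Fintype m] (X : Matrix m m ℂ) : Set ℂ :=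
  {z | ∃ x : m → ℂ, ∑ i, ‖x i‖ ^ 2 = 1 ∧ dotProduct (star x) (X *ᵥ x) = z}

/-- Numerical radius. -/
noncomputable def numRadius {m : Type*} [Fintype m] (X : Matrix m m ℂ) : ℝ :=
  sSup ((fun z : ℂ => ‖z‖) '' numRange X)

/-!
Conjugating `M` by the unitary `W = (1/√2) [[1, i], [i, 1]]` gives a positive semi-definite
matrix `N` whose diagonal blocks are `(A + B)/2 ± Im X`. It therefore suffices to show that every
positive semi-definite `N = [[N₁₁, *], [*, N₂₂]]` is `U (N₁₁ ⊕ 0) U* + V (0 ⊕ N₂₂) V*`.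
Write `N = S²` with `S = N^{1/2}` and split `1 = P₁ + P₂` into the two coordinate projections, so
that `N = S P₁ S + S P₂ S`. Each `S Pᵢ S = (Pᵢ S)* (Pᵢ S)` is unitarily similar to
`(Pᵢ S) (Pᵢ S)* = Pᵢ N Pᵢ`, the `i`-th diagonal block of `N`: `T* T` and `T T*` are Hermitian with
the same characteristic polynomial, hence have the same eigenvalues.
-/

theorem Unitary.eq_conj_add_conj_of_conj_eq {R : Type*} [Ring R] [StarRing R] {w u v : unitary R}
    {x a b : R} (h : w * x * star (w : R) = u * a * star (u : R) + v * b * star (v : R)) :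
    x = ((star w * u : unitary R) : R) * a * star ((star w * u : unitary R) : R) +
      ((star w * v : unitary R) : R) * b * star ((star w * v : unitary R) : R) := by
  have hx : x = star (w : R) * (w * x * star (w : R)) * w := by
    simp [← mul_assoc, mul_assoc x]
  rw [hx, h]
  simp [mul_add, add_mul, mul_assoc]

theorem Complex.ofReal_sqrt_two_sq : (Real.sqrt 2 : ℂ) ^ 2 = 2 := by
  rw [← Complex.ofReal_pow, Real.sq_sqrt zero_le_two, Complex.ofReal_ofNat]

namespace Matrix

section UnitarySimilarity

open Unitary

variable {𝕜 : Type*} [RCLike 𝕜] {ι : Type*} [Fintype ι] [DecidableEq ι]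

theorem IsHermitian.exists_unitary_eq_mul_mul_conjTranspose_of_charpoly_eq {A B : Matrix ι ι 𝕜}
    (hA : A.IsHermitian) (hB : B.IsHermitian) (h : A.charpoly = B.charpoly) :
    ∃ U : unitaryGroup ι 𝕜, A = (U : Matrix ι ι 𝕜) * B * (U : Matrix ι ι 𝕜)ᴴ := by
  refine ⟨hA.eigenvectorUnitary * star hB.eigenvectorUnitary, ?_⟩
  have hA' := hA.spectral_theorem
  rwa [(hA.eigenvalues_eq_eigenvalues_iff hB).mpr h, ← hB.conjStarAlgAut_star_eigenvectorUnitary,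
    ← conjStarAlgAut_mul_apply, conjStarAlgAut_apply] at hA'

theorem exists_unitary_conjTranspose_mul_self_eq (T : Matrix ι ι 𝕜) :
    ∃ U : unitaryGroup ι 𝕜, Tᴴ * T = (U : Matrix ι ι 𝕜) * (T * Tᴴ) * (U : Matrix ι ι 𝕜)ᴴ :=
  (isHermitian_conjTranspose_mul_self T).exists_unitary_eq_mul_mul_conjTranspose_of_charpoly_eq
    (isHermitian_mul_conjTranspose_self T) (charpoly_mul_comm _ _)

theorem IsStarProjection.exists_unitary_mul_mul_eq {P S : Matrix ι ι 𝕜} (hP : IsStarProjection P)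
    (hS : S.IsHermitian) :
    ∃ U : unitaryGroup ι 𝕜,
      S * P * S = (U : Matrix ι ι 𝕜) * (P * (S * S) * P) * (U : Matrix ι ι 𝕜)ᴴ := by
  obtain ⟨U, hU⟩ := exists_unitary_conjTranspose_mul_self_eq (P * S)
  have hPh : Pᴴ = P := hP.isSelfAdjoint
  have hleft : (P * S)ᴴ * (P * S) = S * P * S := by
    rw [conjTranspose_mul, hS.eq, hPh, mul_assoc, ← mul_assoc P, hP.isIdempotentElem.eq,
      mul_assoc]
  have hright : (P * S) * (P * S)ᴴ = P * (S * S) * P := by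
    rw [conjTranspose_mul, hS.eq, hPh]
    simp only [mul_assoc]
  exact ⟨U, by rwa [hleft, hright] at hU⟩

end UnitarySimilarity

open scoped MatrixOrder in
theorem PosSemidef.exists_unitary_eq_add_fromBlocks {𝕜 : Type*} [RCLike 𝕜] {m n : Type*}
    [Fintype m] [DecidableEq m] [Fintype n] [DecidableEq n] {N : Matrix (m ⊕ n) (m ⊕ n) 𝕜}
    (hN : N.PosSemidef) :
    ∃ U V : unitaryGroup (m ⊕ n) 𝕜,
      N = (U : Matrix (m ⊕ n) (m ⊕ n) 𝕜) * fromBlocks N.toBlocks₁₁ 0 0 0 *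
          (U : Matrix (m ⊕ n) (m ⊕ n) 𝕜)ᴴ +
        (V : Matrix (m ⊕ n) (m ⊕ n) 𝕜) * fromBlocks 0 0 0 N.toBlocks₂₂ *
          (V : Matrix (m ⊕ n) (m ⊕ n) 𝕜)ᴴ := by
  set S := CFC.sqrt N
  have hS : S.IsHermitian := (CFC.sqrt_nonneg N).posSemidef.1
  have hSS : S * S = N := CFC.sqrt_mul_sqrt_self N hN.nonneg
  obtain ⟨U, hU⟩ := IsStarProjection.exists_unitary_mul_mul_eq (P := fromBlocks 1 0 0 0)
    ⟨by simp [IsIdempotentElem, fromBlocks_multiply],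
      by simp [IsSelfAdjoint, star_eq_conjTranspose, fromBlocks_conjTranspose]⟩ hS
  obtain ⟨V, hV⟩ := IsStarProjection.exists_unitary_mul_mul_eq (P := fromBlocks 0 0 0 1)
    ⟨by simp [IsIdempotentElem, fromBlocks_multiply],
      by simp [IsSelfAdjoint, star_eq_conjTranspose, fromBlocks_conjTranspose]⟩ hS
  have hsum : (fromBlocks 1 0 0 0 + fromBlocks 0 0 0 1 : Matrix (m ⊕ n) (m ⊕ n) 𝕜) = 1 := by
    simp [fromBlocks_add, ← fromBlocks_one]
  have h₁₁ : fromBlocks 1 0 0 0 * N * fromBlocks 1 0 0 0 = fromBlocks N.toBlocks₁₁ 0 0 0 := by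
    conv_lhs => rw [← fromBlocks_toBlocks N]
    simp [fromBlocks_multiply]
  have h₂₂ : fromBlocks 0 0 0 1 * N * fromBlocks 0 0 0 1 = fromBlocks 0 0 0 N.toBlocks₂₂ := by
    conv_lhs => rw [← fromBlocks_toBlocks N]
    simp [fromBlocks_multiply]
  refine ⟨U, V, ?_⟩
  calc N = S * (fromBlocks 1 0 0 0 + fromBlocks 0 0 0 1) * S := by rw [hsum, mul_one, hSS]
    _ = S * fromBlocks 1 0 0 0 * S + S * fromBlocks 0 0 0 1 * S := by rw [mul_add, add_mul]
    _ = _ := by rw [hU, hV, hSS, h₁₁, h₂₂]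

section BlockRotation

variable {ι : Type*} [DecidableEq ι]

variable (ι) in
noncomputable def blockRotation : Matrix (ι ⊕ ι) (ι ⊕ ι) ℂ :=
  (Real.sqrt 2 : ℂ)⁻¹ • fromBlocks 1 (Complex.I • 1) (Complex.I • 1) 1

theorem blockRotation_conjTranspose :
    (blockRotation ι)ᴴ =
      (Real.sqrt 2 : ℂ)⁻¹ • fromBlocks 1 (-Complex.I • 1) (-Complex.I • 1) 1 := by
  simp [blockRotation, fromBlocks_conjTranspose, conjTranspose_smul]

variable [Fintype ι]

theorem blockRotation_mem_unitaryGroup : blockRotation ι ∈ unitaryGroup (ι ⊕ ι) ℂ := by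
  rw [mem_unitaryGroup_iff, star_eq_conjTranspose, blockRotation_conjTranspose, blockRotation]
  simp only [Matrix.smul_mul, Matrix.mul_smul, smul_smul, fromBlocks_multiply,
    Matrix.one_mul, fromBlocks_smul, ← fromBlocks_one, fromBlocks_inj]
  refine ⟨?_, ?_, ?_, ?_⟩ <;> match_scalars <;> ring_nf <;>
    simp [Complex.ofReal_sqrt_two_sq, Complex.I_sq] <;> ring

theorem blockRotation_mul_fromBlocks_mul_conjTranspose (A B X : Matrix ι ι ℂ) :
    blockRotation ι * fromBlocks A X Xᴴ B * (blockRotation ι)ᴴ =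
      fromBlocks ((1 / 2 : ℂ) • (A + B) + ((2 * Complex.I)⁻¹ : ℂ) • (X - Xᴴ))
        ((1 / 2 : ℂ) • (X + Xᴴ) + (Complex.I / 2) • (B - A))
        ((1 / 2 : ℂ) • (X + Xᴴ) - (Complex.I / 2) • (B - A))
        ((1 / 2 : ℂ) • (A + B) - ((2 * Complex.I)⁻¹ : ℂ) • (X - Xᴴ)) := by
  rw [blockRotation_conjTranspose, blockRotation]
  simp only [Matrix.smul_mul, Matrix.mul_smul, smul_smul, fromBlocks_multiply,
    Matrix.one_mul, Matrix.mul_one, fromBlocks_smul, fromBlocks_inj]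
  refine ⟨?_, ?_, ?_, ?_⟩ <;> match_scalars <;> ring_nf <;>
    simp [Complex.ofReal_sqrt_two_sq, Complex.I_sq] <;> ring

end BlockRotation

end Matrix

theorem decomposition_im {n : ℕ} (A B X : Matrix (Fin n) (Fin n) ℂ)
    (hM : (Matrix.fromBlocks A X Xᴴ B).PosSemidef) :
    ∃ U V : Matrix.unitaryGroup (Fin n ⊕ Fin n) ℂ,
      Matrix.fromBlocks A X Xᴴ B =
        (U : Matrix (Fin n ⊕ Fin n) (Fin n ⊕ Fin n) ℂ) *
          Matrix.fromBlocks ((1 / 2 : ℂ) • (A + B) + ((2 * Complex.I)⁻¹ : ℂ) • (X - Xᴴ)) 0 0 0 *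
          (U : Matrix (Fin n ⊕ Fin n) (Fin n ⊕ Fin n) ℂ)ᴴ +
        (V : Matrix (Fin n ⊕ Fin n) (Fin n ⊕ Fin n) ℂ) *
          Matrix.fromBlocks 0 0 0 ((1 / 2 : ℂ) • (A + B) - ((2 * Complex.I)⁻¹ : ℂ) • (X - Xᴴ)) *
          (V : Matrix (Fin n ⊕ Fin n) (Fin n ⊕ Fin n) ℂ)ᴴ := by
  let W : unitaryGroup (Fin n ⊕ Fin n) ℂ := ⟨blockRotation (Fin n), blockRotation_mem_unitaryGroup⟩
  obtain ⟨U, V, hN⟩ :=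
    (hM.mul_mul_conjTranspose_same (blockRotation (Fin n))).exists_unitary_eq_add_fromBlocks
  rw [blockRotation_mul_fromBlocks_mul_conjTranspose, toBlocks_fromBlocks₁₁,
    toBlocks_fromBlocks₂₂, ← blockRotation_mul_fromBlocks_mul_conjTranspose] at hN
  exact ⟨star W * U, star W * V, Unitary.eq_conj_add_conj_of_conj_eq hN⟩
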